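/- Let S be a family of subsets of a set X with finite VC dimension d ≥ 1. Then for all n ≥ d, the growth function satisfies mₙ(S) ≤ (en/d)^d. -/
import Mathlib


open Real

/-- `S` shatters the finite set `F` if every subset of `F` is a trace of some `A ∈ S`. -/
def ShattersFam {X : Type*} (S : Set (Set X)) (F : Finset X) : Prop :=
  ∀ T ⊆ F, ∃ A ∈ S, (↑F : Set X) ∩ A = ↑T

/-- The growth function of a family of sets: the maximal number of distinct traces
on an `n`-point subset. -/
noncomputable def growthFn {X : Type*} (S : Set (Set X)) (n : ℕ) : ℕ :=
  sSup {k | ∃ F : Finset X, F.card = n ∧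
    k = Set.ncard ((fun A => (↑F : Set X) ∩ A) '' S)}

lemma binom_sum_bound (d n : ℕ) (hd : 1 ≤ d) (hdn : d ≤ n) :
    (∑ i ∈ Finset.range (d + 1), (n.choose i : ℝ)) ≤ (Real.exp 1 * n / d) ^ d := by
  have hn0 : 0 < n := lt_of_lt_of_le hd hdn
  have hn : (0:ℝ) < n := by exact_mod_cast hn0
  have hdR : (0:ℝ) < d := by exact_mod_cast hd
  set x : ℝ := (d : ℝ) / n with hx
  have hx0 : 0 < x := by positivity
  have hx1 : x ≤ 1 := by
    rw [hx, div_le_one hn]; exact_mod_cast hdn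
  have step1 : (∑ i ∈ Finset.range (d + 1), (n.choose i : ℝ)) * x ^ d
      ≤ (1 + x) ^ n := by
    rw [Finset.sum_mul]
    calc ∑ i ∈ Finset.range (d + 1), (n.choose i : ℝ) * x ^ d
        ≤ ∑ i ∈ Finset.range (d + 1), (n.choose i : ℝ) * x ^ i := by
          apply Finset.sum_le_sum
          intro i hi
          have : x ^ d ≤ x ^ i :=
            pow_le_pow_of_le_one hx0.le hx1 (Nat.lt_succ_iff.mp (Finset.mem_range.mp hi))
          exact mul_le_mul_of_nonneg_left this (by positivity)
      _ ≤ ∑ i ∈ Finset.range (n + 1), (n.choose i : ℝ) * x ^ i := by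
          apply Finset.sum_le_sum_of_subset_of_nonneg
          · exact Finset.range_subset_range.mpr (by omega)
          · intro i _ _; positivity
      _ = (1 + x) ^ n := by
          rw [add_comm 1 x, add_pow x 1 n]
          refine Finset.sum_congr rfl fun i _ => ?_
          rw [one_pow, mul_one, mul_comm]
  have step2 : (1 + x) ^ n ≤ Real.exp 1 ^ d := by
    have h1 : (1 + x) ^ n ≤ Real.exp x ^ n := by
      apply pow_le_pow_left₀ (by positivity)
      linarith [Real.add_one_le_exp x]
    have h2 : Real.exp x ^ n = Real.exp 1 ^ d := by
      rw [← Real.exp_nat_mul, ← Real.exp_nat_mul]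
      have hn' : (n:ℝ) ≠ 0 := hn.ne'
      congr 1
      rw [hx]
      field_simp
    exact h1.trans_eq h2
  have key : (Real.exp 1 * n / d) ^ d * x ^ d = Real.exp 1 ^ d := by
    rw [← mul_pow]
    congr 1
    have hn' : (n:ℝ) ≠ 0 := hn.ne'
    have hd' : (d:ℝ) ≠ 0 := hdR.ne'
    rw [hx]
    field_simp
  have h := step1.trans step2
  rw [← key] at h
  exact le_of_mul_le_mul_right h (pow_pos hx0 d)

lemma trace_bound {X : Type*} (S : Set (Set X)) (d : ℕ)
    (hnot : ¬ ∃ F : Finset X, F.card = d + 1 ∧ ShattersFam S F)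
    (F : Finset X) :
    Set.ncard ((fun A => (↑F : Set X) ∩ A) '' S)
      ≤ ∑ i ∈ Finset.range (d + 1), (F.card).choose i := by
  classical
  set 𝒜 : Finset (Finset X) :=
    F.powerset.filter (fun T => ∃ A ∈ S, (↑F : Set X) ∩ A = ↑T) with h𝒜
  have hmem : ∀ T, T ∈ 𝒜 ↔ T ⊆ F ∧ ∃ A ∈ S, (↑F : Set X) ∩ A = ↑T := by
    intro T; simp [h𝒜, Finset.mem_filter, Finset.mem_powerset]
  have himg : ((fun A => (↑F : Set X) ∩ A) '' S) = (↑· : Finset X → Set X) '' ↑𝒜 := by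
    ext B
    constructor
    · rintro ⟨A, hA, rfl⟩
      refine ⟨F.filter (· ∈ A), ?_, by ext x; simp [and_comm]⟩
      rw [Finset.mem_coe, hmem]
      exact ⟨Finset.filter_subset _ _, A, hA, by ext x; simp [and_comm]⟩
    · rintro ⟨T, hT, rfl⟩
      rw [Finset.mem_coe, hmem] at hT
      obtain ⟨-, A, hA, hFA⟩ := hT
      exact ⟨A, hA, hFA⟩
  have hcard : Set.ncard ((fun A => (↑F : Set X) ∩ A) '' S) = 𝒜.card := by
    rw [himg, Set.ncard_image_of_injective _ Finset.coe_injective, Set.ncard_coe_finset]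
  rw [hcard]
  refine le_trans (Finset.card_le_card_shatterer 𝒜) ?_
  have hsub : 𝒜.shatterer ⊆ (Finset.range (d + 1)).biUnion (fun i => F.powersetCard i) := by
    intro s hs
    rw [Finset.mem_shatterer] at hs
    have hsF : s ⊆ F := by
      obtain ⟨u, hu, hsu⟩ := hs.exists_superset
      exact hsu.trans ((hmem u).mp hu).1
    have hcard : s.card ≤ d := by
      by_contra hlt
      obtain ⟨G, hGs, hGcard⟩ := Finset.exists_subset_card_eq (show d + 1 ≤ s.card by omega)
      apply hnot
      refine ⟨G, hGcard, fun T hT => ?_⟩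
      obtain ⟨u, hu, hGu⟩ := (hs.mono_right hGs) hT
      obtain ⟨huF, A, hA, hFA⟩ := (hmem u).mp hu
      refine ⟨A, hA, ?_⟩
      have hGF : (↑G : Set X) ⊆ ↑F := Finset.coe_subset.mpr (hGs.trans hsF)
      calc (↑G : Set X) ∩ A = ↑G ∩ (↑F ∩ A) := by
            rw [← Set.inter_assoc, Set.inter_eq_left.mpr hGF]
        _ = ↑G ∩ ↑u := by rw [hFA]
        _ = ↑(G ∩ u) := (Finset.coe_inter _ _).symm
        _ = ↑T := by rw [hGu]
    exact Finset.mem_biUnion.mpr ⟨s.card, Finset.mem_range.mpr (by omega),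
      Finset.mem_powersetCard.mpr ⟨hsF, rfl⟩⟩
  refine le_trans (Finset.card_le_card hsub) ?_
  refine le_trans (Finset.card_biUnion_le) ?_
  exact Finset.sum_le_sum fun i _ => le_of_eq (Finset.card_powersetCard i F)

theorem sauer_shelah_exponential
    {X : Type*} (S : Set (Set X)) (d : ℕ) (hd : 1 ≤ d)
    (hshat : ∃ F : Finset X, F.card = d ∧ ShattersFam S F)
    (hnot : ¬ ∃ F : Finset X, F.card = d + 1 ∧ ShattersFam S F) :
    ∀ n : ℕ, d ≤ n →
      (growthFn S n : ℝ) ≤ (Real.exp 1 * n / d) ^ d := by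
  intro n hn
  have hbound : growthFn S n ≤ ∑ i ∈ Finset.range (d + 1), n.choose i := by
    apply csSup_le'
    rintro k ⟨F, hF, rfl⟩
    rw [← hF]
    exact trace_bound S d hnot F
  calc (growthFn S n : ℝ) ≤ (∑ i ∈ Finset.range (d + 1), n.choose i : ℕ) := by
        exact_mod_cast hbound
    _ = ∑ i ∈ Finset.range (d + 1), (n.choose i : ℝ) := by push_cast; ring
    _ ≤ (Real.exp 1 * n / d) ^ d := binom_sum_bound d n hd hn
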